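/- Let 𝓑 be a unital C*-algebra, η : 𝓑 → 𝓑 a positive bounded linear map, b ∈ H⁺(𝓑), and r > ‖Im(b)⁻¹‖. Then for every w ∈ h_b(D_r) (i.e., w = h_b(u) for some u ∈ D_r) one has (1/r²)·‖h_b(w) − w‖ ≤ ‖Δ_b(w)‖ ≤ m_r⁴·‖Im(b)⁻¹‖²·‖h_b(w) − w‖, where Δ_b(w) := b − w⁻¹ − η(w) and m_r := ‖b‖ + r·‖η‖. -/

import Mathlib

open ComplexStarModule

set_option linter.unusedSectionVars false
set_option maxHeartbeats 1000000

/-- The imaginary part `Im(b) = (b − b*)/(2i)` of an element of a C*-algebra. -/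
noncomputable def imPart {B : Type*} [CStarAlgebra B] (b : B) : B :=
  ((2 : ℂ) * Complex.I)⁻¹ • (b - star b)

/-- The upper half-plane `H⁺(𝓑) = {b : ∃ ε > 0, Im(b) ≥ ε·1}`. -/
def upperHalfPlane (B : Type*) [CStarAlgebra B] [PartialOrder B] : Set B :=
  {b | ∃ ε : ℝ, 0 < ε ∧ (ε : ℂ) • (1 : B) ≤ imPart b}

/-- The lower half-plane `H⁻(𝓑) = {b : ∃ ε > 0, −Im(b) ≥ ε·1}`. -/
def lowerHalfPlane (B : Type*) [CStarAlgebra B] [PartialOrder B] : Set B :=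
  {b | ∃ ε : ℝ, 0 < ε ∧ (ε : ℂ) • (1 : B) ≤ -imPart b}

section Aux

variable {B : Type*} [CStarAlgebra B] [PartialOrder B] [StarOrderedRing B]

lemma imPart_eq (a : B) : imPart a = (ℑ a : B) := by
  rw [imPart, imaginaryPart_apply_coe]
  rw [← Complex.coe_smul, smul_smul]
  congr 1
  simp [mul_inv, Complex.inv_I]

lemma isSelfAdjoint_imPart (a : B) : IsSelfAdjoint (imPart a) := by
  rw [imPart_eq]; exact (ℑ a).2

lemma imPart_sub (a c : B) : imPart (a - c) = imPart a - imPart c := by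
  simp only [imPart, star_sub, smul_sub]
  abel

lemma norm_imPart_le (a : B) : ‖imPart a‖ ≤ ‖a‖ := by
  rw [imPart, norm_smul]
  have h1 : ‖((2:ℂ)*Complex.I)⁻¹‖ = 1/2 := by simp [norm_inv]
  rw [h1]
  have := norm_sub_le a (star a)
  rw [norm_star] at this
  linarith

lemma imPart_conj (y a : B) : imPart (star y * a * y) = star y * imPart a * y := by
  simp only [imPart, star_mul, star_star, mul_assoc, mul_smul_comm, smul_mul_assoc,
    mul_sub, sub_mul]

lemma imPart_units_inv (v : Bˣ) :
    imPart ((↑v⁻¹ : B)) = -((↑v⁻¹ : B) * imPart (↑v : B) * star ((↑v⁻¹ : B))) := by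
  have h1 : (↑v⁻¹ : B) * ((↑v : B) - star (↑v : B)) * star ((↑v⁻¹ : B))
      = star ((↑v⁻¹ : B)) - (↑v⁻¹ : B) := by
    rw [mul_sub, v.inv_mul, sub_mul, one_mul, mul_assoc, ← star_mul, v.inv_mul, star_one,
      mul_one]
  rw [imPart, imPart, mul_smul_comm, smul_mul_assoc, h1, ← smul_neg, neg_sub]

lemma star_coe_inv_of_sa (u : Bˣ) (h : IsSelfAdjoint ((↑u : B))) :
    star ((↑u⁻¹ : B)) = ↑u⁻¹ := by
  have h1 : (↑u : B) * ↑u⁻¹ = 1 := u.mul_inv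
  have h2 : star ((↑u⁻¹ : B)) * ↑u = 1 := by
    have := congrArg star h1
    rwa [star_mul, h.star_eq, star_one] at this
  calc star ((↑u⁻¹ : B)) = star ((↑u⁻¹ : B)) * ((↑u : B) * ↑u⁻¹) := by rw [h1, mul_one]
  _ = (star ((↑u⁻¹ : B)) * ↑u) * ↑u⁻¹ := by rw [mul_assoc]
  _ = ↑u⁻¹ := by rw [h2, one_mul]

lemma eta_selfAdjoint (η : B →L[ℂ] B) (hη : ∀ x : B, 0 ≤ x → 0 ≤ η x)
    {v : B} (hv : IsSelfAdjoint v) : IsSelfAdjoint (η v) := by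
  have hd : η v = η (v⁺) - η (v⁻) := by
    rw [← map_sub, CFC.posPart_sub_negPart v hv]
  rw [hd]
  exact (IsSelfAdjoint.of_nonneg (hη _ (CFC.posPart_nonneg v))).sub
    (IsSelfAdjoint.of_nonneg (hη _ (CFC.negPart_nonneg v)))

lemma eta_star (η : B →L[ℂ] B) (hη : ∀ x : B, 0 ≤ x → 0 ≤ η x) (x : B) :
    η (star x) = star (η x) := by
  have hx := realPart_add_I_smul_imaginaryPart x
  have hre : IsSelfAdjoint (η (ℜ x : B)) := eta_selfAdjoint η hη (ℜ x).2
  have him : IsSelfAdjoint (η (ℑ x : B)) := eta_selfAdjoint η hη (ℑ x).2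
  have h1 : star x = (ℜ x : B) - Complex.I • (ℑ x : B) := by
    conv_lhs => rw [← hx]
    rw [star_add, (ℜ x).2.star_eq, star_smul, (ℑ x).2.star_eq]
    simp [sub_eq_add_neg]
  have h2 : η x = η (ℜ x : B) + Complex.I • η (ℑ x : B) := by
    conv_lhs => rw [← hx]
    rw [map_add, map_smul]
  rw [h1, h2, map_sub, map_smul, star_add, hre.star_eq, star_smul, him.star_eq]
  simp [sub_eq_add_neg]

lemma imPart_eta (η : B →L[ℂ] B) (hη : ∀ x : B, 0 ≤ x → 0 ≤ η x) (x : B) :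
    imPart (η x) = η (imPart x) := by
  rw [imPart, imPart, map_smul, map_sub, eta_star η hη]

variable [Nontrivial B]

lemma norm_coe_inv_pos (u : Bˣ) : 0 < ‖(↑u⁻¹ : B)‖ := by
  rw [norm_pos_iff]
  intro h0
  have : (1 : B) = 0 := by rw [← u.mul_inv, h0, mul_zero]
  exact one_ne_zero this

lemma pos_unit_lower (u : Bˣ) (hu0 : 0 ≤ (↑u : B)) :
    ‖(↑u⁻¹ : B)‖⁻¹ • (1 : B) ≤ (↑u : B) := by
  have hsa : IsSelfAdjoint (↑u : B) := IsSelfAdjoint.of_nonneg hu0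
  have hstar : star ((↑u⁻¹ : B)) = ↑u⁻¹ := star_coe_inv_of_sa u hsa
  have hi0 : (0 : B) ≤ ↑u⁻¹ := by
    have := star_left_conjugate_nonneg hu0 ((↑u⁻¹ : B))
    rwa [hstar, u.inv_mul, one_mul] at this
  have hi_le : (↑u⁻¹ : B) ≤ ‖(↑u⁻¹ : B)‖ • 1 := by
    have := IsSelfAdjoint.le_algebraMap_norm_self (a := (↑u⁻¹ : B))
    rwa [Algebra.algebraMap_eq_smul_one] at this
  set t := CFC.sqrt (↑u : B) with ht_def
  have ht0 : 0 ≤ t := CFC.sqrt_nonneg _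
  have htsa : IsSelfAdjoint t := IsSelfAdjoint.of_nonneg ht0
  have htt : t * t = ↑u := CFC.sqrt_mul_sqrt_self _ hu0
  have hcomm : Commute t ((↑u⁻¹ : B)) := by
    have h1 : Commute t ((↑u : B)) := by
      rw [← htt]; exact (Commute.refl t).mul_right (Commute.refl t)
    exact h1.units_inv_right
  have hconj := star_left_conjugate_le_conjugate hi_le t
  rw [htsa.star_eq] at hconj
  have hL : t * (↑u⁻¹ : B) * t = 1 := by
    rw [mul_assoc, ← hcomm.eq, ← mul_assoc, htt, u.mul_inv]
  have hR : t * (‖(↑u⁻¹ : B)‖ • (1:B)) * t = ‖(↑u⁻¹ : B)‖ • (↑u : B) := by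
    rw [mul_smul_comm, smul_mul_assoc, mul_one, htt]
  rw [hL, hR] at hconj
  have hn := norm_coe_inv_pos u
  calc ‖(↑u⁻¹ : B)‖⁻¹ • (1 : B) ≤ ‖(↑u⁻¹ : B)‖⁻¹ • (‖(↑u⁻¹ : B)‖ • (↑u : B)) :=
        smul_le_smul_of_nonneg_left hconj (by positivity)
  _ = (↑u : B) := by rw [smul_smul, inv_mul_cancel₀ hn.ne', one_smul]

lemma key_unit {a : B} {ε : ℝ} (hε : 0 < ε) (ha : ε • (1 : B) ≤ imPart a) :
    ∃ u : Bˣ, (↑u : B) = a ∧ ‖(↑u⁻¹ : B)‖ ≤ ε⁻¹ := by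
  have hs_sa : IsSelfAdjoint (imPart a) := isSelfAdjoint_imPart a
  have hsm0 : (0:B) ≤ ε • 1 := smul_nonneg hε.le zero_le_one
  have hs0 : 0 ≤ imPart a := hsm0.trans ha
  have hsu : IsUnit (imPart a) := by
    refine CStarAlgebra.isUnit_of_le _ ha ⟨hsm0, ?_⟩
    rw [← Algebra.algebraMap_eq_smul_one]
    exact (isUnit_iff_ne_zero.mpr hε.ne').map (algebraMap ℝ B)
  set t := CFC.sqrt (imPart a) with ht_def
  have ht0 : 0 ≤ t := CFC.sqrt_nonneg _
  have htsa : IsSelfAdjoint t := IsSelfAdjoint.of_nonneg ht0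
  have htt : t * t = imPart a := CFC.sqrt_mul_sqrt_self _ hs0
  have hcomm : Commute t ((↑hsu.unit⁻¹ : B)) := by
    have h1 : Commute t (imPart a) := by
      rw [← htt]; exact (Commute.refl t).mul_right (Commute.refl t)
    rw [← hsu.unit_spec] at h1
    exact h1.units_inv_right
  have hp1 : t * (t * (↑hsu.unit⁻¹ : B)) = 1 := by
    rw [← mul_assoc, htt, hsu.mul_val_inv]
  have hp2 : (t * (↑hsu.unit⁻¹ : B)) * t = 1 := by
    rw [mul_assoc, ← hcomm.eq, hp1]
  set ut : Bˣ := ⟨t, t * (↑hsu.unit⁻¹ : B), hp1, hp2⟩ with hut_def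
  have hut_coe : (↑ut : B) = t := rfl
  have hstar_inv : star ((↑ut⁻¹ : B)) = ↑ut⁻¹ := by
    refine star_coe_inv_of_sa ut ?_
    rw [hut_coe]; exact htsa
  set k := (↑ut⁻¹ : B) * (ℜ a : B) * (↑ut⁻¹ : B) with hk_def
  have hk_sa : IsSelfAdjoint k := by
    rw [IsSelfAdjoint, hk_def, star_mul, star_mul, hstar_inv, (ℜ a).2.star_eq, mul_assoc]
  have hknot : (-Complex.I) ∉ spectrum ℂ k := by
    intro hmem
    have := hk_sa.mem_spectrum_eq_re hmem
    simp [Complex.ext_iff] at this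
  have hki : IsUnit (k + Complex.I • 1) := by
    rw [spectrum.notMem_iff] at hknot
    have heq : k + Complex.I • 1 = -(algebraMap ℂ B (-Complex.I) - k) := by
      rw [Algebra.algebraMap_eq_smul_one, neg_smul]
      abel
    rw [heq]
    exact hknot.neg
  have hdecomp : (↑ut : B) * (k + Complex.I • 1) * ↑ut = a := by
    have h1 : (↑ut : B) * k * ↑ut = (ℜ a : B) := by
      rw [hk_def, ← mul_assoc, ← mul_assoc, ut.mul_inv, one_mul, mul_assoc, ut.inv_mul, mul_one]
    have h2 : (↑ut : B) * (Complex.I • 1) * ↑ut = Complex.I • imPart a := by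
      rw [mul_smul_comm, smul_mul_assoc, mul_one, hut_coe, htt]
    rw [mul_add, add_mul, h1, h2, imPart_eq]
    exact realPart_add_I_smul_imaginaryPart a
  have hau : IsUnit a := by
    rw [← hdecomp]
    exact (ut.isUnit.mul hki).mul ut.isUnit
  refine ⟨hau.unit, hau.unit_spec, ?_⟩
  have key : ∀ y : B, ε * (‖y‖ * ‖y‖) ≤ ‖y‖ * ‖a * y‖ := by
    intro y
    have c1 : ε • (star y * y) ≤ star y * imPart a * y := by
      have h := star_left_conjugate_le_conjugate ha y
      rwa [show star y * (ε • (1:B)) * y = ε • (star y * y) by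
        rw [mul_smul_comm, smul_mul_assoc, mul_one]] at h
    have c0 : (0:B) ≤ ε • (star y * y) := smul_nonneg hε.le (star_mul_self_nonneg y)
    have c2 : ‖ε • (star y * y)‖ ≤ ‖star y * imPart a * y‖ :=
      CStarAlgebra.norm_le_norm_of_nonneg_of_le c0 c1
    have c3 : star y * imPart a * y = imPart (star y * a * y) := (imPart_conj y a).symm
    have c4 : ‖imPart (star y * a * y)‖ ≤ ‖star y * a * y‖ := norm_imPart_le _
    have c5 : ‖star y * a * y‖ ≤ ‖y‖ * ‖a * y‖ := by
      calc ‖star y * a * y‖ = ‖star y * (a * y)‖ := by rw [mul_assoc]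
      _ ≤ ‖star y‖ * ‖a * y‖ := norm_mul_le _ _
      _ = ‖y‖ * ‖a * y‖ := by rw [norm_star]
    have c6 : ‖ε • (star y * y)‖ = ε * (‖y‖ * ‖y‖) := by
      rw [norm_smul, Real.norm_of_nonneg hε.le, CStarRing.norm_star_mul_self]
    rw [c6, c3] at c2
    linarith
  set x := (↑hau.unit⁻¹ : B) with hx_def
  have hay : a * (x * star x) = star x := by
    rw [← mul_assoc, hau.mul_val_inv, one_mul]
  have hyn : ‖x * star x‖ = ‖x‖ * ‖x‖ := CStarRing.norm_self_mul_star
  have hn : 0 < ‖x‖ := norm_coe_inv_pos hau.unit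
  have hkey := key (x * star x)
  rw [hay, hyn, norm_star] at hkey
  have hfin : ε * ‖x‖ ≤ 1 := by nlinarith [mul_pos (mul_pos hn hn) hn]
  have : ‖x‖ ≤ 1 / ε := by rw [le_div_iff₀ hε]; linarith
  simpa [one_div] using this

end Aux

/-- For `w ∈ h_b(D_r)` one has
`(1/r²)·‖h_b(w) − w‖ ≤ ‖Δ_b(w)‖ ≤ m_r⁴·‖Im(b)⁻¹‖²·‖h_b(w) − w‖`, where
`Δ_b(w) = b − w⁻¹ − η(w)`, `h_b(w) = (b − η(w))⁻¹` and `m_r = ‖b‖ + r‖η‖`. -/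
theorem termination_condition_Delta {B : Type*} [CStarAlgebra B]
    [PartialOrder B] [StarOrderedRing B]
    (η : B →L[ℂ] B) (hη : ∀ x : B, 0 ≤ x → 0 ≤ η x)
    (b : B) (hb : b ∈ upperHalfPlane B)
    (r : ℝ) (hr : ‖Ring.inverse (imPart b)‖ < r)
    (w : B)
    (hw : w ∈ (fun u => Ring.inverse (b - η u)) '' {u ∈ lowerHalfPlane B | ‖u‖ < r}) :
    (1 / r ^ 2) * ‖Ring.inverse (b - η w) - w‖ ≤ ‖b - Ring.inverse w - η w‖ ∧
    ‖b - Ring.inverse w - η w‖ ≤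
      (‖b‖ + r * ‖η‖) ^ 4 * ‖Ring.inverse (imPart b)‖ ^ 2 *
        ‖Ring.inverse (b - η w) - w‖ := by
  rcases subsingleton_or_nontrivial B with hsub | hnt
  · have h1 : (Ring.inverse (b - η w) - w) = 0 := Subsingleton.elim _ _
    have h2 : (b - Ring.inverse w - η w) = 0 := Subsingleton.elim _ _
    rw [h1, h2, norm_zero]
    constructor <;> simp
  obtain ⟨u, ⟨⟨εu, hεu, hu2⟩, hu3⟩, hwdef⟩ := hw
  obtain ⟨εb, hεb, hb2⟩ := hb
  have hr0 : 0 < r := lt_of_le_of_lt (norm_nonneg _) hr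
  have hb2' : εb • (1:B) ≤ imPart b := by rwa [Complex.coe_smul] at hb2
  have hu2' : εu • (1:B) ≤ -imPart u := by rwa [Complex.coe_smul] at hu2
  -- the imaginary part of b is a positive invertible element
  have hsb0 : 0 ≤ imPart b := le_trans (smul_nonneg hεb.le zero_le_one) hb2'
  have hsbu : IsUnit (imPart b) := by
    refine CStarAlgebra.isUnit_of_le _ hb2' ⟨smul_nonneg hεb.le zero_le_one, ?_⟩
    rw [← Algebra.algebraMap_eq_smul_one]
    exact (isUnit_iff_ne_zero.mpr hεb.ne').map (algebraMap ℝ B)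
  set N := ‖Ring.inverse (imPart b)‖ with hN_def
  have hNinv : Ring.inverse (imPart b) = (↑hsbu.unit⁻¹ : B) := by
    have h := Ring.inverse_unit hsbu.unit
    rwa [hsbu.unit_spec] at h
  have hNpos : 0 < N := by rw [hN_def, hNinv]; exact norm_coe_inv_pos _
  have hν : 0 < N⁻¹ := inv_pos.mpr hNpos
  have hνb : N⁻¹ • (1:B) ≤ imPart b := by
    have h0 : (0:B) ≤ (↑hsbu.unit : B) := by rw [hsbu.unit_spec]; exact hsb0
    have h := pos_unit_lower hsbu.unit h0
    rw [hsbu.unit_spec] at h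
    rwa [hN_def, hNinv]
  -- η of the imaginary part of u is nonpositive
  have hηu : η (imPart u) ≤ 0 := by
    have h0 : (0:B) ≤ -imPart u := le_trans (smul_nonneg hεu.le zero_le_one) hu2'
    have := hη _ h0
    rw [map_neg] at this
    exact neg_nonneg.mp this
  have ha_im : N⁻¹ • (1:B) ≤ imPart (b - η u) := by
    rw [imPart_sub, imPart_eta η hη]
    refine le_trans hνb ?_
    rw [sub_eq_add_neg]
    exact le_add_of_nonneg_right (neg_nonneg.mpr hηu)
  obtain ⟨ua, hua_coe, hua_norm0⟩ := key_unit hν ha_im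
  have hua_norm : ‖(↑ua⁻¹ : B)‖ ≤ N := by rwa [inv_inv] at hua_norm0
  have hwdef' : Ring.inverse (b - η u) = w := hwdef
  have hw_eq : w = ↑ua⁻¹ := by rw [← hwdef', ← hua_coe, Ring.inverse_unit]
  have hwN : ‖w‖ ≤ N := by rw [hw_eq]; exact hua_norm
  -- the imaginary part of w is nonpositive
  have hw_im : imPart w ≤ 0 := by
    rw [hw_eq, imPart_units_inv]
    refine neg_nonpos.mpr (star_right_conjugate_nonneg ?_ _)
    rw [hua_coe]
    exact le_trans (smul_nonneg hν.le zero_le_one) ha_im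
  have hηw : η (imPart w) ≤ 0 := by
    have h0 : (0:B) ≤ -imPart w := neg_nonneg.mpr hw_im
    have := hη _ h0
    rw [map_neg] at this
    exact neg_nonneg.mp this
  have hc_im : N⁻¹ • (1:B) ≤ imPart (b - η w) := by
    rw [imPart_sub, imPart_eta η hη]
    refine le_trans hνb ?_
    rw [sub_eq_add_neg]
    exact le_add_of_nonneg_right (neg_nonneg.mpr hηw)
  obtain ⟨uc, huc_coe, huc_norm0⟩ := key_unit hν hc_im
  have huc_norm : ‖(↑uc⁻¹ : B)‖ ≤ N := by rwa [inv_inv] at huc_norm0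
  have hh_eq : Ring.inverse (b - η w) = (↑uc⁻¹ : B) := by
    rw [← huc_coe, Ring.inverse_unit]
  have hrw_inv : Ring.inverse w = (↑ua : B) := by
    rw [hw_eq, Ring.inverse_unit, inv_inv]
  have hΔ2 : b - (↑ua : B) - η w = (↑uc : B) - ↑ua := by
    rw [huc_coe]; abel
  -- the two fundamental identities
  have hid : (↑uc⁻¹ : B) - w = -((↑uc⁻¹ : B) * ((↑uc : B) - ↑ua) * (↑ua⁻¹ : B)) := by
    rw [hw_eq, mul_sub, uc.inv_mul, sub_mul, one_mul, mul_assoc, ua.mul_inv, mul_one, neg_sub]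
  have hid2 : ((↑uc : B) - ↑ua) = -((↑uc : B) * ((↑uc⁻¹ : B) - w) * (↑ua : B)) := by
    rw [hw_eq, mul_sub, uc.mul_inv, sub_mul, one_mul, mul_assoc, ua.inv_mul, mul_one, neg_sub]
  -- norm bounds on the units
  set m := ‖b‖ + r * ‖η‖ with hm_def
  have hηn : (0:ℝ) ≤ ‖η‖ := norm_nonneg _
  have hma : ‖(↑ua : B)‖ ≤ m := by
    rw [hua_coe]
    calc ‖b - η u‖ ≤ ‖b‖ + ‖η u‖ := norm_sub_le _ _
    _ ≤ ‖b‖ + ‖η‖ * ‖u‖ := by have := η.le_opNorm u; linarith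
    _ ≤ m := by rw [hm_def]; nlinarith [hu3.le, norm_nonneg u]
  have hmc : ‖(↑uc : B)‖ ≤ m := by
    rw [huc_coe]
    have hwr : ‖w‖ ≤ r := le_trans hwN hr.le
    calc ‖b - η w‖ ≤ ‖b‖ + ‖η w‖ := norm_sub_le _ _
    _ ≤ ‖b‖ + ‖η‖ * ‖w‖ := by have := η.le_opNorm w; linarith
    _ ≤ m := by rw [hm_def]; nlinarith [norm_nonneg w]
  have hm0 : (0:ℝ) ≤ m := le_trans (norm_nonneg _) hma
  have h1le : (1:ℝ) ≤ m * N := by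
    calc (1:ℝ) = ‖((↑ua : B) * ↑ua⁻¹)‖ := by rw [ua.mul_inv, norm_one]
    _ ≤ ‖(↑ua : B)‖ * ‖(↑ua⁻¹ : B)‖ := norm_mul_le _ _
    _ ≤ m * N := mul_le_mul hma hua_norm (norm_nonneg _) hm0
  -- the two estimates
  have EL : ‖Ring.inverse (b - η w) - w‖ ≤ r ^ 2 * ‖b - Ring.inverse w - η w‖ := by
    rw [hh_eq, hrw_inv, hΔ2]
    calc ‖(↑uc⁻¹ : B) - w‖ = ‖(↑uc⁻¹ : B) * ((↑uc : B) - ↑ua) * (↑ua⁻¹ : B)‖ := by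
          rw [hid, norm_neg]
    _ ≤ ‖(↑uc⁻¹ : B) * ((↑uc : B) - ↑ua)‖ * ‖(↑ua⁻¹ : B)‖ := norm_mul_le _ _
    _ ≤ (‖(↑uc⁻¹ : B)‖ * ‖(↑uc : B) - ↑ua‖) * ‖(↑ua⁻¹ : B)‖ :=
          mul_le_mul_of_nonneg_right (norm_mul_le _ _) (norm_nonneg _)
    _ ≤ (r * ‖(↑uc : B) - ↑ua‖) * r := by
          have h1 : ‖(↑uc⁻¹ : B)‖ ≤ r := le_trans huc_norm hr.le
          have h2 : ‖(↑ua⁻¹ : B)‖ ≤ r := le_trans hua_norm hr.le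
          exact mul_le_mul (mul_le_mul h1 le_rfl (norm_nonneg _) hr0.le) h2
            (norm_nonneg _) (by positivity)
    _ = r ^ 2 * ‖(↑uc : B) - ↑ua‖ := by ring
  have ER : ‖b - Ring.inverse w - η w‖ ≤ m ^ 2 * ‖Ring.inverse (b - η w) - w‖ := by
    rw [hh_eq, hrw_inv, hΔ2]
    calc ‖(↑uc : B) - ↑ua‖ = ‖(↑uc : B) * ((↑uc⁻¹ : B) - w) * (↑ua : B)‖ := by
          rw [hid2, norm_neg]
    _ ≤ ‖(↑uc : B) * ((↑uc⁻¹ : B) - w)‖ * ‖(↑ua : B)‖ := norm_mul_le _ _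
    _ ≤ (‖(↑uc : B)‖ * ‖(↑uc⁻¹ : B) - w‖) * ‖(↑ua : B)‖ :=
          mul_le_mul_of_nonneg_right (norm_mul_le _ _) (norm_nonneg _)
    _ ≤ (m * ‖(↑uc⁻¹ : B) - w‖) * m :=
          mul_le_mul (mul_le_mul hmc le_rfl (norm_nonneg _) hm0) hma
            (norm_nonneg _) (by positivity)
    _ = m ^ 2 * ‖(↑uc⁻¹ : B) - w‖ := by ring
  constructor
  · rw [div_mul_eq_mul_div, div_le_iff₀ (by positivity)]
    nlinarith [EL]
  · have hsq : (1:ℝ) ≤ (m * N) ^ 2 := by nlinarith [h1le, hm0, hNpos.le]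
    have key2 : m ^ 2 ≤ m ^ 4 * N ^ 2 := by
      calc m ^ 2 = m ^ 2 * 1 := (mul_one _).symm
      _ ≤ m ^ 2 * (m * N) ^ 2 := mul_le_mul_of_nonneg_left hsq (sq_nonneg m)
      _ = m ^ 4 * N ^ 2 := by ring
    calc ‖b - Ring.inverse w - η w‖ ≤ m ^ 2 * ‖Ring.inverse (b - η w) - w‖ := ER
    _ ≤ m ^ 4 * N ^ 2 * ‖Ring.inverse (b - η w) - w‖ :=
          mul_le_mul_of_nonneg_right key2 (norm_nonneg _)
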